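/- arXiv:2601.04914 — 3 statements merged into one kernel-verified Lean document; each statement's English description precedes it below -/
import Mathlib

section
/- Let ρ > 1 and L ≥ 1, and let φ be holomorphic on a neighborhood of L·E_ρ with M := sup_{L·E_ρ} |φ| < ∞. Then there exists C(ρ) > 0 such that for every m ≥ 1, every B_m > 0, every f ∈ C([-1,1]), and every network g_m(x) = ∑_{k=1}^m λ_k φ(α_k x) with ∑|λ_k| ≤ B_m and |α_k| ≤ L, one has ‖f − g_m‖_{L^∞([-1,1])} ≥ E_m(f) − C(ρ) · B_m · M · ρ^{-m}. -/
open Filter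

/-- Closed Bernstein ellipse region with parameter ρ (image of the annulus 1 ≤ |w| ≤ ρ
under the Joukowski map). -/
noncomputable def bernsteinRegion (ρ : ℝ) : Set ℂ :=
  {z | ∃ w : ℂ, 1 ≤ ‖w‖ ∧ ‖w‖ ≤ ρ ∧ z = (w + w⁻¹) / 2}

/-- Uniform norm of a function on [-1,1]. -/
noncomputable def uNorm (f : ℝ → ℝ) : ℝ :=
  sSup ((fun x => |f x|) '' Set.Icc (-1 : ℝ) 1)

/-- Error of best uniform approximation on [-1,1] by polynomials of degree ≤ m. -/
noncomputable def bestApprox (m : ℕ) (f : ℝ → ℝ) : ℝ :=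
  sInf {e : ℝ | ∃ p : Polynomial ℝ, p.natDegree ≤ m ∧
    ∀ x ∈ Set.Icc (-1 : ℝ) 1, |f x - Polynomial.eval x p| ≤ e}

/-!
The network `g = ∑ λₖ φ(αₖ ·)` extends to `G z = ∑ λₖ Φ(αₖ z)`, which is holomorphic on the
Bernstein region `E_ρ` and bounded there by `B M`: since `E_ρ` is the filled ellipse
`‖z - 1‖ + ‖z + 1‖ ≤ ρ + ρ⁻¹`, hence convex and symmetric, it is stable under real scalings `|c| ≤ 1`, so `αₖ E_ρ ⊆ L E_ρ`. Bernstein's inequality then gives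
`E_m(g) ≤ C B M ρ⁻ᵐ`, and `E_m(f) ≤ ‖f - g‖ + E_m(g)` because `E_m` is `1`-Lipschitz for the
uniform norm.
-/

open Set

theorem add_inv_le_add_inv_iff {s t : ℝ} (hs : 1 ≤ s) (ht : 1 ≤ t) :
    s + s⁻¹ ≤ t + t⁻¹ ↔ s ≤ t := by
  have hst : 1 ≤ s * t := one_le_mul_of_one_le_of_one_le hs ht
  have key : s + s⁻¹ - (t + t⁻¹) = (s - t) * (s * t - 1) / (s * t) := by
    field_simp
    ring
  constructor
  · intro h
    by_contra! hlt
    have : 0 < (s - t) * (s * t - 1) / (s * t) := by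
      have : 1 < s * t := one_lt_mul_of_lt_of_le (ht.trans_lt hlt) ht
      apply div_pos <;> nlinarith
    linarith
  · intro h
    have : (s - t) * (s * t - 1) / (s * t) ≤ 0 :=
      div_nonpos_of_nonpos_of_nonneg (mul_nonpos_of_nonpos_of_nonneg (by linarith) (by linarith))
        (by linarith)
    linarith

theorem norm_joukowski_sub_one_add_norm_joukowski_add_one {w : ℂ} (hw : w ≠ 0) :
    ‖(w + w⁻¹) / 2 - 1‖ + ‖(w + w⁻¹) / 2 + 1‖ = ‖w‖ + ‖w‖⁻¹ := by
  have hsub : (w + w⁻¹) / 2 - 1 = (w - 1) ^ 2 / (2 * w) := by field_simp; ring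
  have hadd : (w + w⁻¹) / 2 + 1 = (w + 1) ^ 2 / (2 * w) := by field_simp; ring
  have hpar := parallelogram_law_with_norm ℝ w 1
  rw [hsub, hadd, norm_div, norm_div, norm_pow, norm_pow, norm_mul, Complex.norm_two]
  rw [norm_one] at hpar
  have : 0 < ‖w‖ := norm_pos_iff.2 hw
  field_simp
  linarith

theorem exists_joukowski_eq (z : ℂ) : ∃ w : ℂ, 1 ≤ ‖w‖ ∧ z = (w + w⁻¹) / 2 := by
  have of_mul_eq_one : ∀ a b : ℂ, a * b = 1 → a + b = 2 * z → 1 ≤ ‖a‖ →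
      ∃ w : ℂ, 1 ≤ ‖w‖ ∧ z = (w + w⁻¹) / 2 := fun a b hab hsum ha =>
    ⟨a, ha, by rw [inv_eq_of_mul_eq_one_right hab]; linear_combination -hsum / 2⟩
  obtain ⟨s, hs⟩ := IsAlgClosed.exists_pow_nat_eq (z ^ 2 - 1) two_pos
  have hprod : (z + s) * (z - s) = 1 := by linear_combination -hs
  rcases le_or_gt 1 ‖z + s‖ with h | h
  · exact of_mul_eq_one _ _ hprod (by ring) h
  · refine of_mul_eq_one (z - s) (z + s) (by linear_combination hprod) (by ring) ?_
    have := congrArg norm hprod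
    rw [norm_mul, norm_one] at this
    nlinarith [norm_nonneg (z + s)]

theorem mem_bernsteinRegion_iff {ρ : ℝ} (hρ : 1 ≤ ρ) {z : ℂ} :
    z ∈ bernsteinRegion ρ ↔ ‖z - 1‖ + ‖z + 1‖ ≤ ρ + ρ⁻¹ := by
  constructor
  · rintro ⟨w, hw, hwρ, rfl⟩
    rw [norm_joukowski_sub_one_add_norm_joukowski_add_one (norm_pos_iff.1 (by linarith))]
    exact (add_inv_le_add_inv_iff hw hρ).2 hwρ
  · intro h
    obtain ⟨w, hw, rfl⟩ := exists_joukowski_eq z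
    rw [norm_joukowski_sub_one_add_norm_joukowski_add_one (norm_pos_iff.1 (by linarith))] at h
    exact ⟨w, hw, (add_inv_le_add_inv_iff hw hρ).1 h, rfl⟩

theorem convex_bernsteinRegion {ρ : ℝ} (hρ : 1 ≤ ρ) : Convex ℝ (bernsteinRegion ρ) := by
  have hsub : ConvexOn ℝ univ (fun z : ℂ => ‖z - 1‖) := by
    simpa [Function.comp_def, neg_add_eq_sub] using
      (convexOn_univ_norm (E := ℂ)).translate_right (-1)
  have hadd : ConvexOn ℝ univ (fun z : ℂ => ‖z + 1‖) := by
    simpa [Function.comp_def, add_comm] using (convexOn_univ_norm (E := ℂ)).translate_right 1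
  rw [show bernsteinRegion ρ = {z | ‖z - 1‖ + ‖z + 1‖ ≤ ρ + ρ⁻¹} from
    ext fun z => mem_bernsteinRegion_iff hρ]
  simpa using (hsub.add hadd).convex_le (ρ + ρ⁻¹)

theorem neg_mem_bernsteinRegion {ρ : ℝ} {z : ℂ} (hz : z ∈ bernsteinRegion ρ) :
    -z ∈ bernsteinRegion ρ := by
  obtain ⟨w, hw, hwρ, rfl⟩ := hz
  exact ⟨-w, by rwa [norm_neg], by rwa [norm_neg], by rw [inv_neg]; ring⟩

theorem one_mem_bernsteinRegion {ρ : ℝ} (hρ : 1 ≤ ρ) : (1 : ℂ) ∈ bernsteinRegion ρ :=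
  ⟨1, by simp, by simpa using hρ, by norm_num⟩

theorem ofReal_mul_mem_bernsteinRegion {ρ c : ℝ} (hρ : 1 ≤ ρ) (hc : |c| ≤ 1) {z : ℂ}
    (hz : z ∈ bernsteinRegion ρ) : (c : ℂ) * z ∈ bernsteinRegion ρ := by
  obtain ⟨hc₁, hc₂⟩ := abs_le.1 hc
  have := convex_bernsteinRegion hρ (neg_mem_bernsteinRegion hz) hz
    (a := (1 - c) / 2) (b := (1 + c) / 2) (by linarith) (by linarith) (by ring)
  convert this using 1
  simp only [Complex.real_smul]
  push_cast
  ring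

theorem ofReal_mem_bernsteinRegion {ρ x : ℝ} (hρ : 1 ≤ ρ) (hx : x ∈ Icc (-1 : ℝ) 1) :
    (x : ℂ) ∈ bernsteinRegion ρ := by
  simpa using ofReal_mul_mem_bernsteinRegion hρ (abs_le.2 hx) (one_mem_bernsteinRegion hρ)

theorem ofReal_mul_mem_image_mul_bernsteinRegion {ρ L c : ℝ} (hρ : 1 ≤ ρ) (hL : 0 < L)
    (hc : |c| ≤ L) {z : ℂ} (hz : z ∈ bernsteinRegion ρ) :
    (c : ℂ) * z ∈ (fun z => (L : ℂ) * z) '' bernsteinRegion ρ := by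
  refine ⟨((c / L : ℝ) : ℂ) * z, ofReal_mul_mem_bernsteinRegion hρ ?_ hz, ?_⟩
  · rwa [abs_div, abs_of_pos hL, div_le_one hL]
  · have : (L : ℂ) ≠ 0 := Complex.ofReal_ne_zero.2 hL.ne'
    push_cast
    field_simp

theorem ContinuousOn.of_eqOn_ofReal_bernsteinRegion {ρ : ℝ} (hρ : 1 ≤ ρ) {H : ℂ → ℂ}
    {h : ℝ → ℝ} (hH : ContinuousOn H (bernsteinRegion ρ))
    (hHh : ∀ x ∈ Icc (-1 : ℝ) 1, H x = h x) : ContinuousOn h (Icc (-1 : ℝ) 1) := by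
  have : ContinuousOn (fun x : ℝ => (H x).re) (Icc (-1 : ℝ) 1) :=
    Complex.continuous_re.comp_continuousOn
      (hH.comp Complex.continuous_ofReal.continuousOn fun x hx => ofReal_mem_bernsteinRegion hρ hx)
  exact this.congr fun x hx => by simp [hHh x hx]

theorem abs_le_uNorm {u : ℝ → ℝ} (hu : ContinuousOn u (Icc (-1 : ℝ) 1)) {x : ℝ}
    (hx : x ∈ Icc (-1 : ℝ) 1) : |u x| ≤ uNorm u :=
  le_csSup (isCompact_Icc.image_of_continuousOn hu.abs).bddAbove ⟨x, hx, rfl⟩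

theorem bestApprox_le {m : ℕ} {f : ℝ → ℝ} {e : ℝ} (p : Polynomial ℝ) (hp : p.natDegree ≤ m)
    (hfp : ∀ x ∈ Icc (-1 : ℝ) 1, |f x - p.eval x| ≤ e) : bestApprox m f ≤ e :=
  csInf_le ⟨0, by rintro e ⟨p, -, hp⟩; exact (abs_nonneg _).trans (hp 0 (by norm_num))⟩
    ⟨p, hp, hfp⟩

theorem bestApprox_le_uNorm_sub_add_bestApprox {m : ℕ} {f g : ℝ → ℝ}
    (hf : ContinuousOn f (Icc (-1 : ℝ) 1)) (hg : ContinuousOn g (Icc (-1 : ℝ) 1)) :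
    bestApprox m f ≤ uNorm (fun x => f x - g x) + bestApprox m g := by
  rw [← sub_le_iff_le_add']
  obtain ⟨C, hC⟩ := isCompact_Icc.exists_bound_of_continuousOn hg
  refine le_csInf ⟨C, 0, by simp, by simpa using hC⟩ ?_
  rintro e ⟨p, hp, hgp⟩
  rw [sub_le_iff_le_add']
  refine bestApprox_le p hp fun x hx => ?_
  calc |f x - p.eval x| ≤ |f x - g x| + |g x - p.eval x| := abs_sub_le _ _ _
    _ ≤ uNorm (fun x => f x - g x) + e := add_le_add (abs_le_uNorm (hf.sub hg) hx) (hgp x hx)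

section Network

variable {ι : Type*} [Fintype ι] {ρ L : ℝ} {Φ : ℂ → ℂ} {lam alp : ι → ℝ}

theorem differentiableOn_sum_mul_comp_mul (hρ : 1 ≤ ρ) (hL : 0 < L)
    (hΦ : DifferentiableOn ℂ Φ ((fun z => (L : ℂ) * z) '' bernsteinRegion ρ))
    (halp : ∀ k, |alp k| ≤ L) :
    DifferentiableOn ℂ (fun z => ∑ k, (lam k : ℂ) * Φ (alp k * z)) (bernsteinRegion ρ) :=
  DifferentiableOn.fun_sum fun k _ =>
    (hΦ.comp (differentiableOn_id.const_mul _) fun _ hz =>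
      ofReal_mul_mem_image_mul_bernsteinRegion hρ hL (halp k) hz).const_mul _

theorem norm_sum_mul_comp_mul_le (hρ : 1 ≤ ρ) (hL : 0 < L) {M B : ℝ}
    (hM : ∀ w ∈ (fun z => (L : ℂ) * z) '' bernsteinRegion ρ, ‖Φ w‖ ≤ M)
    (hlam : ∑ k, |lam k| ≤ B) (halp : ∀ k, |alp k| ≤ L) {z : ℂ} (hz : z ∈ bernsteinRegion ρ) :
    ‖∑ k, (lam k : ℂ) * Φ (alp k * z)‖ ≤ B * M := by
  have hM₀ : 0 ≤ M := (norm_nonneg _).trans (hM _ ⟨1, one_mem_bernsteinRegion hρ, mul_one _⟩)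
  calc ‖∑ k, (lam k : ℂ) * Φ (alp k * z)‖ ≤ ∑ k, ‖(lam k : ℂ) * Φ (alp k * z)‖ := norm_sum_le _ _
    _ ≤ ∑ k, |lam k| * M := Finset.sum_le_sum fun k _ => by
      rw [norm_mul, Complex.norm_real, Real.norm_eq_abs]
      exact mul_le_mul_of_nonneg_left
        (hM _ (ofReal_mul_mem_image_mul_bernsteinRegion hρ hL (halp k) hz)) (abs_nonneg _)
    _ = (∑ k, |lam k|) * M := (Finset.sum_mul _ _ _).symm
    _ ≤ B * M := mul_le_mul_of_nonneg_right hlam hM₀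

end Network

theorem stmt3_general (ρ L M Cρ : ℝ) (hρ : 1 < ρ) (hL : 1 ≤ L)
    (φ : ℝ → ℝ) (Φ : ℂ → ℂ) (U : Set ℂ)
    (hsub : (fun z => (L : ℂ) * z) '' bernsteinRegion ρ ⊆ U)
    (hΦ : DifferentiableOn ℂ Φ U) (hext : ∀ x : ℝ, Φ x = φ x)
    (hM : ∀ w ∈ (fun z => (L : ℂ) * z) '' bernsteinRegion ρ, ‖Φ w‖ ≤ M)
    (hBern : ∀ (h : ℝ → ℝ) (H : ℂ → ℂ) (Mh : ℝ),
      DifferentiableOn ℂ H (bernsteinRegion ρ) →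
      (∀ x ∈ Set.Icc (-1 : ℝ) 1, H x = h x) →
      (∀ z ∈ bernsteinRegion ρ, ‖H z‖ ≤ Mh) →
      ∀ n : ℕ, bestApprox n h ≤ Cρ * Mh / ρ ^ n)
    (m : ℕ) (Bm : ℝ)
    (f : ℝ → ℝ) (hf : ContinuousOn f (Set.Icc (-1 : ℝ) 1))
    (lam alp : Fin m → ℝ) (hlam : ∑ k, |lam k| ≤ Bm) (halp : ∀ k, |alp k| ≤ L) :
    bestApprox m f - Cρ * Bm * M / ρ ^ m
      ≤ uNorm (fun x => f x - ∑ k, lam k * φ (alp k * x)) := by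
  have hρ₁ : 1 ≤ ρ := hρ.le
  have hL₀ : 0 < L := one_pos.trans_le hL
  have hG := differentiableOn_sum_mul_comp_mul (lam := lam) hρ₁ hL₀ (hΦ.mono hsub) halp
  have hGg : ∀ x ∈ Icc (-1 : ℝ) 1,
      ∑ k, (lam k : ℂ) * Φ (alp k * x) = ((∑ k, lam k * φ (alp k * x) : ℝ) : ℂ) := by
    intro x _
    have hΦφ : ∀ k, Φ (alp k * x) = φ (alp k * x) := fun k => by rw [← Complex.ofReal_mul, hext]
    push_cast [hΦφ]
    rfl
  have hg := hG.continuousOn.of_eqOn_ofReal_bernsteinRegion hρ₁ hGg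
  have hBernstein := hBern _ _ (Bm * M) hG hGg
    (fun z hz => norm_sum_mul_comp_mul_le hρ₁ hL₀ hM hlam halp hz) m
  rw [mul_assoc]
  linarith [bestApprox_le_uNorm_sub_add_bestApprox (m := m) hf hg]

/-- polynomial approximation barrier, analytic case. -/
theorem stmt3 (ρ L M Cρ : ℝ) (hρ : 1 < ρ) (hL : 1 ≤ L) (hCρ : 0 < Cρ)
    (φ : ℝ → ℝ) (Φ : ℂ → ℂ) (U : Set ℂ) (hU : IsOpen U)
    (hsub : (fun z => (L : ℂ) * z) '' bernsteinRegion ρ ⊆ U)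
    (hΦ : DifferentiableOn ℂ Φ U) (hext : ∀ x : ℝ, Φ x = φ x)
    (hM : ∀ w ∈ (fun z => (L : ℂ) * z) '' bernsteinRegion ρ, ‖Φ w‖ ≤ M)
    (hBern : ∀ (h : ℝ → ℝ) (H : ℂ → ℂ) (Mh : ℝ),
      DifferentiableOn ℂ H (bernsteinRegion ρ) →
      (∀ x ∈ Set.Icc (-1 : ℝ) 1, H x = h x) →
      (∀ z ∈ bernsteinRegion ρ, ‖H z‖ ≤ Mh) →
      ∀ n : ℕ, bestApprox n h ≤ Cρ * Mh / ρ ^ n)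
    (m : ℕ) (hm : 1 ≤ m) (Bm : ℝ) (hBm : 0 < Bm)
    (f : ℝ → ℝ) (hf : ContinuousOn f (Set.Icc (-1 : ℝ) 1))
    (lam alp : Fin m → ℝ) (hlam : ∑ k, |lam k| ≤ Bm) (halp : ∀ k, |alp k| ≤ L) :
    bestApprox m f - Cρ * Bm * M / ρ ^ m
      ≤ uNorm (fun x => f x - ∑ k, lam k * φ (alp k * x)) :=
  stmt3_general ρ L M Cρ hρ hL φ Φ U hsub hΦ hext hM hBern m Bm f hf lam alp hlam halp
end

section
/- Let s > 1 and let φ ∈ G^s(ℝ), i.e., sup_t |φ^{(n)}(t)| ≤ C_φ R_φ^n (n!)^s for all n. Assume the Gevrey polynomial approximation estimate: any h ∈ C^∞([-1,1]) with ‖h^{(n)}‖_∞ ≤ C_h Q^n (n!)^s satisfies E_m(h) ≤ A·C_h·exp(−c(m/Q)^{1/s}) for absolute constants A, c > 0. Then for every f ∈ C([-1,1]), every m ≥ 1, and every network g_m = ∑_{k=1}^m λ_k φ(α_k ·) with ∑|λ_k| ≤ B_m and |α_k| ≤ L_m, one has ‖f − g_m‖_∞ ≥ E_m(f) − A·C_φ·B_m·exp(−c·(m/(R_φ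 L_m))^{1/s}). -/
open Filter

private lemma myIteratedDeriv_sum {ι : Type*} (u : Finset ι) (n : ℕ) (f : ι → ℝ → ℝ)
    (h : ∀ i ∈ u, ContDiff ℝ n (f i)) (x : ℝ) :
    iteratedDeriv n (fun y => ∑ i ∈ u, f i y) x = ∑ i ∈ u, iteratedDeriv n (f i) x := by
  have hs := iteratedFDeriv_sum (𝕜 := ℝ) (f := f) (u := u) (i := n) h
  simp only [iteratedDeriv_eq_iteratedFDeriv]
  have h2 : (fun y => ∑ i ∈ u, f i y) = (∑ j ∈ u, f j ·) := by funext y; simp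
  rw [h2, hs]
  simp

private lemma myIteratedDeriv_const_mul (n : ℕ) (c : ℝ) (h : ℝ → ℝ)
    (hh : ContDiff ℝ n h) (x : ℝ) :
    iteratedDeriv n (fun y => c * h y) x = c * iteratedDeriv n h x := by
  simp only [← iteratedDerivWithin_univ]
  exact iteratedDerivWithin_const_mul (Set.mem_univ x) uniqueDiffOn_univ c hh.contDiffWithinAt

/-- polynomial approximation barrier, Gevrey case. -/
theorem stmt5 (s : ℝ) (hs : 1 < s) (Cphi Rphi A c : ℝ)
    (hCphi : 0 < Cphi) (hRphi : 0 < Rphi) (hA : 0 < A) (hc : 0 < c)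
    (φ : ℝ → ℝ) (hφ : ContDiff ℝ (⊤ : ℕ∞) φ)
    (hgev : ∀ (n : ℕ) (t : ℝ),
      |iteratedDeriv n φ t| ≤ Cphi * Rphi ^ n * ((n.factorial : ℕ) : ℝ) ^ s)
    (hApprox : ∀ (h : ℝ → ℝ), ContDiff ℝ (⊤ : ℕ∞) h → ∀ Ch Q : ℝ, 0 < Q →
      (∀ n : ℕ, ∀ x ∈ Set.Icc (-1 : ℝ) 1,
        |iteratedDeriv n h x| ≤ Ch * Q ^ n * ((n.factorial : ℕ) : ℝ) ^ s) →
      ∀ m : ℕ, 1 ≤ m → bestApprox m h ≤ A * Ch * Real.exp (-c * ((m : ℝ) / Q) ^ (1 / s)))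
    (f : ℝ → ℝ) (hf : ContinuousOn f (Set.Icc (-1 : ℝ) 1))
    (m : ℕ) (hm : 1 ≤ m) (Bm Lm : ℝ) (hBm : 0 < Bm) (hLm : 1 ≤ Lm)
    (lam alp : Fin m → ℝ) (hlam : ∑ k, |lam k| ≤ Bm) (halp : ∀ k, |alp k| ≤ Lm) :
    bestApprox m f - A * Cphi * Bm * Real.exp (-c * ((m : ℝ) / (Rphi * Lm)) ^ (1 / s))
      ≤ uNorm (fun x => f x - ∑ k, lam k * φ (alp k * x)) := by
  set g : ℝ → ℝ := fun x => ∑ k, lam k * φ (alp k * x) with hgdef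
  have hphik : ∀ k : Fin m, ContDiff ℝ (⊤ : ℕ∞) (fun x : ℝ => φ (alp k * x)) := fun k => by
    exact hφ.comp (contDiff_const.mul contDiff_id)
  have hgk : ∀ k : Fin m, ContDiff ℝ (⊤ : ℕ∞) (fun x => lam k * φ (alp k * x)) := fun k =>
    contDiff_const.mul (hphik k)
  have hgsmooth : ContDiff ℝ (⊤ : ℕ∞) g := ContDiff.sum fun k _ => hgk k
  have hLm0 : (0:ℝ) < Lm := lt_of_lt_of_le one_pos hLm
  have hQ : (0:ℝ) < Rphi * Lm := mul_pos hRphi hLm0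
  -- derivative bound for g
  have hder : ∀ (n : ℕ) (x : ℝ),
      |iteratedDeriv n g x| ≤ (Cphi * Bm) * (Rphi * Lm) ^ n * ((n.factorial : ℕ) : ℝ) ^ s := by
    intro n x
    have heq : iteratedDeriv n g x
        = ∑ k, lam k * (alp k ^ n * iteratedDeriv n φ (alp k * x)) := by
      rw [hgdef, myIteratedDeriv_sum Finset.univ n _ (fun k _ => (hgk k).of_le (by exact_mod_cast le_top)) x]
      refine Finset.sum_congr rfl fun k _ => ?_
      rw [myIteratedDeriv_const_mul n (lam k) _
        ((hphik k).of_le (by exact_mod_cast le_top)) x]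
      congr 1
      have := iteratedDeriv_comp_const_mul (n := n) (hφ.of_le (by exact_mod_cast le_top)) (alp k)
      have := congrFun this x
      simpa using this
    rw [heq]
    have hfact : (0:ℝ) ≤ ((n.factorial : ℕ) : ℝ) ^ s :=
      Real.rpow_nonneg (Nat.cast_nonneg _) s
    calc |∑ k, lam k * (alp k ^ n * iteratedDeriv n φ (alp k * x))|
        ≤ ∑ k, |lam k * (alp k ^ n * iteratedDeriv n φ (alp k * x))| :=
          Finset.abs_sum_le_sum_abs _ _
      _ ≤ ∑ k, |lam k| * (Lm ^ n * (Cphi * Rphi ^ n * ((n.factorial : ℕ) : ℝ) ^ s)) := by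
          refine Finset.sum_le_sum fun k _ => ?_
          rw [abs_mul, abs_mul, abs_pow]
          refine mul_le_mul_of_nonneg_left ?_ (abs_nonneg _)
          refine mul_le_mul (pow_le_pow_left₀ (abs_nonneg _) (halp k) n) (hgev n _)
            (abs_nonneg _) (pow_nonneg hLm0.le n)
      _ = (∑ k, |lam k|) * (Lm ^ n * (Cphi * Rphi ^ n * ((n.factorial : ℕ) : ℝ) ^ s)) := by
          rw [← Finset.sum_mul]
      _ ≤ Bm * (Lm ^ n * (Cphi * Rphi ^ n * ((n.factorial : ℕ) : ℝ) ^ s)) := by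
          refine mul_le_mul_of_nonneg_right hlam ?_
          positivity
      _ = (Cphi * Bm) * (Rphi * Lm) ^ n * ((n.factorial : ℕ) : ℝ) ^ s := by
          rw [mul_pow]; ring
  -- best approximation of g
  have hgbest : bestApprox m g
      ≤ A * Cphi * Bm * Real.exp (-c * ((m : ℝ) / (Rphi * Lm)) ^ (1 / s)) := by
    have := hApprox g hgsmooth (Cphi * Bm) (Rphi * Lm) hQ
      (fun n x _ => hder n x) m hm
    calc bestApprox m g ≤ A * (Cphi * Bm) * Real.exp (-c * ((m : ℝ) / (Rphi * Lm)) ^ (1 / s)) :=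
          this
      _ = A * Cphi * Bm * Real.exp (-c * ((m : ℝ) / (Rphi * Lm)) ^ (1 / s)) := by ring
  -- comparison: bestApprox m f ≤ uNorm (f - g) + bestApprox m g
  set N := uNorm (fun x => f x - g x) with hNdef
  have hgc : Continuous g := hgsmooth.continuous
  have hbdd : BddAbove ((fun x => |f x - g x|) '' Set.Icc (-1:ℝ) 1) :=
    (isCompact_Icc.image_of_continuousOn ((hf.sub hgc.continuousOn).abs)).bddAbove
  have hNle : ∀ x ∈ Set.Icc (-1:ℝ) 1, |f x - g x| ≤ N := fun x hx =>
    le_csSup hbdd ⟨x, hx, rfl⟩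
  -- S_g nonempty
  have hSg_ne : Set.Nonempty {e : ℝ | ∃ p : Polynomial ℝ, p.natDegree ≤ m ∧
      ∀ x ∈ Set.Icc (-1 : ℝ) 1, |g x - Polynomial.eval x p| ≤ e} := by
    refine ⟨sSup ((fun x => |g x|) '' Set.Icc (-1:ℝ) 1), 0, by simp, fun x hx => ?_⟩
    have hbdd2 : BddAbove ((fun x => |g x|) '' Set.Icc (-1:ℝ) 1) :=
      (isCompact_Icc.image_of_continuousOn (hgc.continuousOn.abs)).bddAbove
    simpa using le_csSup hbdd2 ⟨x, hx, rfl⟩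
  have hSf_bdd : BddBelow {e : ℝ | ∃ p : Polynomial ℝ, p.natDegree ≤ m ∧
      ∀ x ∈ Set.Icc (-1 : ℝ) 1, |f x - Polynomial.eval x p| ≤ e} := by
    refine ⟨0, fun e he => ?_⟩
    obtain ⟨p, _, hp⟩ := he
    exact le_trans (abs_nonneg _) (hp 0 (by norm_num))
  have hcomp : bestApprox m f - N ≤ bestApprox m g := by
    refine le_csInf hSg_ne fun e he => ?_
    obtain ⟨p, hpdeg, hp⟩ := he
    have hmem : N + e ∈ {e : ℝ | ∃ p : Polynomial ℝ, p.natDegree ≤ m ∧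
        ∀ x ∈ Set.Icc (-1 : ℝ) 1, |f x - Polynomial.eval x p| ≤ e} := by
      refine ⟨p, hpdeg, fun x hx => ?_⟩
      calc |f x - Polynomial.eval x p|
          = |(f x - g x) + (g x - Polynomial.eval x p)| := by ring_nf
        _ ≤ |f x - g x| + |g x - Polynomial.eval x p| := abs_add_le _ _
        _ ≤ N + e := add_le_add (hNle x hx) (hp x hx)
    have := csInf_le hSf_bdd hmem
    have hle : bestApprox m f ≤ N + e := this
    linarith
  have : bestApprox m f - A * Cphi * Bm * Real.exp (-c * ((m : ℝ) / (Rphi * Lm)) ^ (1 / s))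
      ≤ N := by linarith
  simpa [hNdef, hgdef] using this
end

section
/- Let s ≥ 1 and let h ∈ C^∞([-1,1]) satisfy ‖h^{(n)}‖_{L^∞([-1,1])} ≤ C_h · Q^n · (n!)^s for all n ≥ 0 and some Q ≥ 1. Then, using the Jackson-type bound E_m(h) ≤ (π/2)^n · ‖h^{(n)}‖_∞ / ((m+1)m(m−1)⋯(m−n+2)) valid for n ≤ m, optimizing over n yields constants A, c > 0 depending only on s such that E_m(h) ≤ A·C_h·exp(−c·(m/Q)^{1/s}) for all m ≥ 1. -/
open Filter

lemma bestApprox_le_const (m : ℕ) (h : ℝ → ℝ) (C : ℝ)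
    (hC : ∀ x ∈ Set.Icc (-1 : ℝ) 1, |h x| ≤ C) : bestApprox m h ≤ C := by
  apply csInf_le
  · refine ⟨0, fun e he => ?_⟩
    obtain ⟨p, _, hp⟩ := he
    exact le_trans (abs_nonneg _) (hp 0 (by norm_num))
  · refine ⟨0, by simp, fun x hx => ?_⟩
    simpa using hC x hx

/-- Jackson-type bounds plus Gevrey derivative bounds yield
sub-exponential polynomial approximation rates. -/
theorem stmt17 (s : ℝ) (hs : 1 ≤ s)
    (hJackson : ∀ (h : ℝ → ℝ), ContDiff ℝ (⊤ : ℕ∞) h → ∀ (n m : ℕ), 1 ≤ n → n ≤ m → ∀ D : ℝ,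
      (∀ x ∈ Set.Icc (-1 : ℝ) 1, |iteratedDeriv n h x| ≤ D) →
      bestApprox m h * (∏ j ∈ Finset.range n, ((m : ℝ) + 1 - j))
        ≤ (Real.pi / 2) ^ n * D) :
    ∃ A > (0 : ℝ), ∃ c > (0 : ℝ), ∀ (h : ℝ → ℝ), ContDiff ℝ (⊤ : ℕ∞) h → ∀ Ch Q : ℝ,
      0 < Ch → 1 ≤ Q →
      (∀ n : ℕ, ∀ x ∈ Set.Icc (-1 : ℝ) 1,
        |iteratedDeriv n h x| ≤ Ch * Q ^ n * ((n.factorial : ℕ) : ℝ) ^ s) →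
      ∀ m : ℕ, 1 ≤ m →
        bestApprox m h ≤ A * Ch * Real.exp (-c * ((m : ℝ) / Q) ^ (1 / s)) := by
  have hs0 : (0:ℝ) < s := lt_of_lt_of_le one_pos hs
  have hsne : s ≠ 0 := ne_of_gt hs0
  have hpie : (8:ℝ) ≤ Real.pi * Real.exp 1 := by
    have h1 : (3.14:ℝ) ≤ Real.pi := by linarith [Real.pi_gt_d6]
    have h2 : (2.7:ℝ) ≤ Real.exp 1 := by linarith [Real.exp_one_gt_d9]
    nlinarith
  have hpiepos : (0:ℝ) < Real.pi * Real.exp 1 := by linarith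
  refine ⟨Real.exp 2, Real.exp_pos 2, (Real.pi * Real.exp 1)⁻¹ ^ (1/s),
    Real.rpow_pos_of_pos (by positivity) _, ?_⟩
  intro h hh Ch Q hCh hQ hder m hm
  have hm0 : (0:ℝ) < m := by exact_mod_cast hm
  have hQ0 : (0:ℝ) < Q := lt_of_lt_of_le one_pos hQ
  set t : ℝ := ((m:ℝ) / (Real.pi * Real.exp 1 * Q)) ^ (1/s) with ht
  have ht0 : 0 ≤ t := Real.rpow_nonneg (by positivity) _
  have hct : (Real.pi * Real.exp 1)⁻¹ ^ (1/s) * ((m:ℝ) / Q) ^ (1/s) = t := by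
    rw [ht, ← Real.mul_rpow (by positivity) (by positivity)]
    congr 1
    field_simp
  rw [neg_mul, hct]
  -- trivial bound : bestApprox ≤ Ch
  have htriv : bestApprox m h ≤ Ch := by
    apply bestApprox_le_const
    intro x hx
    have := hder 0 x hx
    simpa using this
  set N : ℕ := ⌊t⌋₊ with hN
  rcases Nat.eq_zero_or_pos N with hN0 | hN1
  · -- small case: t < 1
    have htlt : t < 1 := by
      have := Nat.lt_floor_add_one t
      rw [← hN, hN0] at this
      simpa using this
    have h1 : (1:ℝ) ≤ Real.exp (2 - t) := Real.one_le_exp (by linarith)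
    have h2 : Real.exp 2 * Real.exp (-t) = Real.exp (2 - t) := by
      rw [← Real.exp_add]; ring_nf
    calc bestApprox m h ≤ Ch := htriv
      _ = Ch * 1 := (mul_one Ch).symm
      _ ≤ Ch * Real.exp (2 - t) := by
          exact mul_le_mul_of_nonneg_left h1 (le_of_lt hCh)
      _ = Real.exp 2 * Ch * Real.exp (-t) := by rw [← h2]; ring
  · -- main case : 1 ≤ N
    have hN1' : (1:ℝ) ≤ (N:ℝ) := by exact_mod_cast hN1
    have hNt : (N:ℝ) ≤ t := Nat.floor_le ht0
    have htN : t < (N:ℝ) + 1 := by exact_mod_cast Nat.lt_floor_add_one t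
    have hts : t ^ s = (m:ℝ) / (Real.pi * Real.exp 1 * Q) := by
      rw [ht, ← Real.rpow_mul (by positivity), one_div, inv_mul_cancel₀ hsne,
        Real.rpow_one]
    have hNs : (N:ℝ) ^ s ≤ (m:ℝ) / (Real.pi * Real.exp 1 * Q) := by
      rw [← hts]
      exact Real.rpow_le_rpow (by positivity) hNt (le_of_lt hs0)
    have hNle : (N:ℝ) ≤ (m:ℝ) / 8 := by
      have h2 : (N:ℝ) ≤ (N:ℝ) ^ s := by
        nth_rewrite 1 [← Real.rpow_one (N:ℝ)]
        exact Real.rpow_le_rpow_of_exponent_le hN1' hs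
      have h3 : (m:ℝ) / (Real.pi * Real.exp 1 * Q) ≤ (m:ℝ) / 8 := by
        apply div_le_div_of_nonneg_left (le_of_lt hm0) (by norm_num)
        nlinarith
      linarith
    have hNm : N ≤ m := by
      have : (N:ℝ) ≤ (m:ℝ) := by linarith
      exact_mod_cast this
    set P : ℝ := ∏ j ∈ Finset.range N, ((m : ℝ) + 1 - j) with hPdef
    have hPle : ((m:ℝ)/2) ^ N ≤ P := by
      have hc : ((m:ℝ)/2) ^ N = ∏ _j ∈ Finset.range N, ((m:ℝ)/2) := by
        rw [Finset.prod_const, Finset.card_range]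
      rw [hPdef, hc]
      apply Finset.prod_le_prod
      · intro i _; positivity
      · intro i hi
        have hiN : (i:ℝ) ≤ (N:ℝ) - 1 := by
          have : i + 1 ≤ N := Finset.mem_range.mp hi
          have : ((i:ℝ) + 1) ≤ (N:ℝ) := by exact_mod_cast this
          linarith
        linarith
    have hPpos : 0 < P := lt_of_lt_of_le (by positivity) hPle
    set D : ℝ := Ch * Q ^ N * ((N.factorial : ℕ) : ℝ) ^ s with hD
    have hJ : bestApprox m h * P ≤ (Real.pi / 2) ^ N * D :=
      hJackson h hh N m hN1 hNm D (fun x hx => hder N x hx)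
    have hkey : bestApprox m h ≤ (Real.pi / 2) ^ N * D / P :=
      (le_div_iff₀ hPpos).mpr hJ
    -- bound the factorial
    have hfact : (((N.factorial : ℕ) : ℝ)) ^ s ≤ ((N:ℝ) ^ s) ^ N := by
      have h1 : ((N.factorial : ℕ) : ℝ) ≤ (N:ℝ) ^ N := by
        exact_mod_cast Nat.factorial_le_pow N
      calc (((N.factorial : ℕ) : ℝ)) ^ s ≤ ((N:ℝ) ^ N) ^ s :=
            Real.rpow_le_rpow (by positivity) h1 (le_of_lt hs0)
        _ = ((N:ℝ) ^ s) ^ N := by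
            rw [← Real.rpow_natCast (N:ℝ) N, ← Real.rpow_mul (by positivity),
              mul_comm, Real.rpow_mul (by positivity), Real.rpow_natCast]
    have hstep1 : (Real.pi / 2) ^ N * D / P
        ≤ (Real.pi / 2) ^ N * (Ch * Q ^ N * ((N:ℝ) ^ s) ^ N) / (((m:ℝ)/2) ^ N) := by
      apply div_le_div₀ (by positivity) ?_ (by positivity) hPle
      rw [hD]
      have hpi : (0:ℝ) ≤ Real.pi / 2 := by positivity
      apply mul_le_mul_of_nonneg_left _ (by positivity)
      exact mul_le_mul_of_nonneg_left hfact (by positivity)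
    have hstep2 : (Real.pi / 2) ^ N * (Ch * Q ^ N * ((N:ℝ) ^ s) ^ N) / (((m:ℝ)/2) ^ N)
        = Ch * (Real.pi * Q * (N:ℝ) ^ s / (m:ℝ)) ^ N := by
      have hmne : (m:ℝ) ≠ 0 := ne_of_gt hm0
      field_simp
      have hmN : (m:ℝ) ^ N * (m:ℝ)⁻¹ ^ N = 1 := by rw [← mul_pow, mul_inv_cancel₀ hmne, one_pow]
      linear_combination (-(Real.pi ^ N * Q ^ N * ((N:ℝ) ^ s) ^ N * (1/2:ℝ) ^ N)) * hmN
    have hbase : Real.pi * Q * (N:ℝ) ^ s / (m:ℝ) ≤ (Real.exp 1)⁻¹ := by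
      rw [div_le_iff₀ hm0]
      have h1 : Real.pi * Q * ((N:ℝ) ^ s) ≤ Real.pi * Q * ((m:ℝ) / (Real.pi * Real.exp 1 * Q)) :=
        mul_le_mul_of_nonneg_left hNs (by positivity)
      have h2 : Real.pi * Q * ((m:ℝ) / (Real.pi * Real.exp 1 * Q)) = (Real.exp 1)⁻¹ * m := by
        field_simp
      linarith
    have hstep3 : (Real.pi * Q * (N:ℝ) ^ s / (m:ℝ)) ^ N ≤ ((Real.exp 1)⁻¹) ^ N :=
      pow_le_pow_left₀ (by positivity) hbase N
    have hstep4 : ((Real.exp 1)⁻¹) ^ N = Real.exp (-(N:ℝ)) := by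
      rw [← Real.exp_neg, ← Real.exp_nat_mul]
      ring_nf
    have hstep5 : Real.exp (-(N:ℝ)) ≤ Real.exp 1 * Real.exp (-t) := by
      rw [← Real.exp_add]
      exact Real.exp_le_exp.mpr (by linarith)
    calc bestApprox m h ≤ (Real.pi / 2) ^ N * D / P := hkey
      _ ≤ Ch * (Real.pi * Q * (N:ℝ) ^ s / (m:ℝ)) ^ N := by rw [← hstep2]; exact hstep1
      _ ≤ Ch * ((Real.exp 1)⁻¹) ^ N := mul_le_mul_of_nonneg_left hstep3 (le_of_lt hCh)
      _ = Ch * Real.exp (-(N:ℝ)) := by rw [hstep4]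
      _ ≤ Ch * (Real.exp 1 * Real.exp (-t)) := mul_le_mul_of_nonneg_left hstep5 (le_of_lt hCh)
      _ ≤ Ch * (Real.exp 2 * Real.exp (-t)) := by
          have h12 : Real.exp 1 ≤ Real.exp 2 := Real.exp_le_exp.mpr (by norm_num)
          have he : 0 ≤ Real.exp (-t) := le_of_lt (Real.exp_pos _)
          exact mul_le_mul_of_nonneg_left
            (mul_le_mul_of_nonneg_right h12 he) (le_of_lt hCh)
      _ = Real.exp 2 * Ch * Real.exp (-t) := by ring
end
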